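/- arXiv:1709.07312 — 4 statements merged into one kernel-verified Lean document; each statement's English description precedes it below -/
import Mathlib

section
/- For integers a, b, c with a odd, F_a · G_{2b+a+c} = F_{a+b} · G_{a+b+c} + F_b · G_{b+c}. -/
/-!
Expanding both `G`-terms by the addition formula `G (m + n) = F m * G (n + 1) + F (m - 1) * G n`
with `n = b + c` reduces the identity to d'Ocagne's identity
`F a * F (a + b - 1) - F (a - 1) * F (a + b) = F b`, valid for odd `a`. Both are proved by the
same principle: a sequence satisfying the Fibonacci recurrence on all of `ℤ` is determined by two
consecutive values; at `b = 1` d'Ocagne's identity is Cassini's identity, whose sign alternates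
with `a`.
-/

def IsFibonacciLike {R : Type*} [CommRing R] (H : ℤ → R) : Prop :=
  ∀ n, H (n + 1) = H n + H (n - 1)

namespace IsFibonacciLike

variable {R : Type*} [CommRing R] {H K : ℤ → R}

theorem linear_comb (hH : IsFibonacciLike H) (x y : R) (i j : ℤ) :
    IsFibonacciLike fun n => x * H (n + i) + y * H (n + j) := fun n => by
  linear_combination (norm := ring_nf) x * hH (n + i) + y * hH (n + j)

theorem ext_of_eq_zero_of_eq_one (hH : IsFibonacciLike H) (hK : IsFibonacciLike K)
    (h0 : H 0 = K 0) (h1 : H 1 = K 1) : H = K := by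
  suffices key : ∀ n, H n = K n ∧ H (n + 1) = K (n + 1) from funext fun n => (key n).1
  intro n
  induction n using Int.induction_on with
  | zero => exact ⟨h0, by simpa using h1⟩
  | succ i ih =>
    refine ⟨ih.2, ?_⟩
    linear_combination (norm := ring_nf) hH (i + 1) - hK (i + 1) + ih.1 + ih.2
  | pred i ih =>
    refine ⟨?_, by simpa using ih.1⟩
    linear_combination (norm := ring_nf) hK (-i) - hH (-i) + ih.2 - ih.1

theorem sq_sub_mul_succ (hH : IsFibonacciLike H) (n : ℤ) :
    H (n + 1) ^ 2 - H n * H (n + 2) = -(H n ^ 2 - H (n - 1) * H (n + 1)) := by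
  linear_combination (norm := ring_nf) H (n + 1) * hH n - H n * hH (n + 1)

theorem sq_sub_mul_add_two_mul (hH : IsFibonacciLike H) (n k : ℤ) :
    H (n + 2 * k) ^ 2 - H (n + 2 * k - 1) * H (n + 2 * k + 1)
      = H n ^ 2 - H (n - 1) * H (n + 1) := by
  induction k using Int.induction_on with
  | zero => simp
  | succ i ih =>
    linear_combination (norm := ring_nf)
      hH.sq_sub_mul_succ (n + 2 * i + 1) - hH.sq_sub_mul_succ (n + 2 * i) + ih
  | pred i ih =>
    linear_combination (norm := ring_nf)
      hH.sq_sub_mul_succ (n - 2 * i - 2) - hH.sq_sub_mul_succ (n - 2 * i - 1) + ih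

variable {F : ℤ → R} (hF0 : F 0 = 0) (hF1 : F 1 = 1) (hF : IsFibonacciLike F)
include hF0 hF1 hF

theorem eq_mul_add_mul (hH : IsFibonacciLike H) (m n : ℤ) :
    H (m + n) = F m * H (n + 1) + F (m - 1) * H n := by
  have hFm1 : F (-1) = 1 := by linear_combination (norm := ring_nf) hF1 - hF 0 - hF0
  have := (hH.linear_comb 1 0 n 0).ext_of_eq_zero_of_eq_one (hF.linear_comb (H (n + 1)) (H n) 0 (-1))
    (by linear_combination (norm := ring_nf) -H (n + 1) * hF0 - H n * hFm1)
    (by linear_combination (norm := ring_nf) -H (n + 1) * hF1 - H n * hF0)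
  linear_combination (norm := ring_nf) congrFun this m

theorem sq_sub_mul_eq_one_of_odd {a : ℤ} (ha : Odd a) : F a ^ 2 - F (a - 1) * F (a + 1) = 1 := by
  obtain ⟨k, rfl⟩ := ha
  linear_combination (norm := ring_nf)
    hF.sq_sub_mul_add_two_mul 1 k + (F 1 + 1) * hF1 - F 2 * hF0

theorem mul_sub_mul_eq_of_odd {a : ℤ} (ha : Odd a) (b : ℤ) :
    F a * F (a + b - 1) - F (a - 1) * F (a + b) = F b := by
  have := (hF.linear_comb (F a) (-F (a - 1)) (a - 1) a).ext_of_eq_zero_of_eq_one hF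
    (by linear_combination (norm := ring_nf) -hF0)
    (by linear_combination (norm := ring_nf) sq_sub_mul_eq_one_of_odd hF0 hF1 hF ha - hF1)
  linear_combination (norm := ring_nf) congrFun this b

end IsFibonacciLike

theorem stmt4 (F G : ℤ → ℤ)
    (hF0 : F 0 = 0) (hF1 : F 1 = 1) (hF : ∀ n : ℤ, F (n+1) = F n + F (n-1))
    (hG : ∀ n : ℤ, G (n+1) = G n + G (n-1))
    (a b c : ℤ) (ha : Odd a) :
    F a * G (2*b + a + c) = F (a+b) * G (a+b+c) + F b * G (b+c) := by
  have expand_long := IsFibonacciLike.eq_mul_add_mul hF0 hF1 hF hG (a + b) (b + c)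
  have expand_short := IsFibonacciLike.eq_mul_add_mul hF0 hF1 hF hG a (b + c)
  have dOcagne := IsFibonacciLike.mul_sub_mul_eq_of_odd hF0 hF1 hF ha b
  linear_combination (norm := ring_nf)
    F a * expand_long - F (a + b) * expand_short + G (b + c) * dOcagne
end

section
/- If p, q, n, t are integers with p, q, n positive and pqn odd, then F_{pq} · ∑_{k=1}^{n} (−1)^{k−1} G_{2pk+pq+t} = F_{pn} · ∑_{k=1}^{q} (−1)^{k−1} G_{2pk+pn+t}. -/
/-!
Let `H m = G (m + 1) + G (m - 1)`. For odd `p` one has `G (m + p) + G (m - p) = F p * H m`, and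
the same sequence built from `H` is `5 * G`. Hence `5 * F p * (-1) ^ (k - 1) * G (2 * p * k + c)` is
`(-1) ^ (k - 1) * (H (2 * p * k + c + p) + H (2 * p * k + c - p))`, and the alternating sum
telescopes: for odd `n`,
`F p * ∑ k ∈ Icc 1 n, (-1) ^ (k - 1) * G (2 * p * k + c) = F (p * n) * G (p * n + p + c)`.
With `c = p * q + t`, both sides of the theorem times `F p` become
`F (p * q) * F (p * n) * G (p * n + p * q + p + t)`, and `F p ≠ 0`.
-/

open Finset

def IsFibLike (G : ℤ → ℤ) : Prop := ∀ m, G (m + 1) = G m + G (m - 1)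

def lucasCompanion (G : ℤ → ℤ) (m : ℤ) : ℤ := G (m + 1) + G (m - 1)

theorem Int.isFibLike_fib : IsFibLike Int.fib := fun m => by
  rw [show m + 1 = (m - 1) + 2 by ring, Int.fib_add_two, sub_add_cancel, add_comm]

theorem Finset.sum_Icc_neg_one_pow_mul_add {R : Type*} [CommRing R] (T : ℕ → R) (n : ℕ) :
    ∑ k ∈ Icc 1 n, (-1 : R) ^ (k - 1) * (T k + T (k - 1)) = T 0 - (-1) ^ n * T n := by
  induction n with
  | zero => simp
  | succ n ih =>
    rw [sum_Icc_succ_top (by omega), ih, Nat.add_sub_cancel, pow_succ]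
    ring

namespace IsFibLike

variable {F G : ℤ → ℤ}

theorem ext (hF : IsFibLike F) (hG : IsFibLike G) (h0 : F 0 = G 0) (h1 : F 1 = G 1) :
    F = G := by
  have key : ∀ m : ℤ, F m = G m ∧ F (m + 1) = G (m + 1) := by
    intro m
    induction m using Int.induction_on with
    | zero => exact ⟨h0, by simpa using h1⟩
    | succ i ih =>
      refine ⟨ih.2, ?_⟩
      have hFi := hF (i + 1)
      have hGi := hG (i + 1)
      simp only [add_sub_cancel_right] at hFi hGi
      rw [hFi, hGi, ih.1, ih.2]
    | pred i ih =>
      refine ⟨?_, by simpa using ih.1⟩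
      linear_combination ih.2 - ih.1 - hF (-i) + hG (-i)
  exact funext fun m => (key m).1

theorem eq_fib (hF : IsFibLike F) (h0 : F 0 = 0) (h1 : F 1 = 1) : F = Int.fib :=
  hF.ext Int.isFibLike_fib (by simp [h0]) (by simp [h1])

theorem comp_add (hG : IsFibLike G) (m : ℤ) : IsFibLike fun n => G (m + n) := fun n => by
  simpa only [add_assoc, add_sub_assoc] using hG (m + n)

theorem apply_add (hG : IsFibLike G) (m n : ℤ) :
    G (m + n) = Int.fib n * G (m + 1) + Int.fib (n - 1) * G m := by
  have hlin : IsFibLike fun n => Int.fib n * G (m + 1) + Int.fib (n - 1) * G m := fun k => by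
    have h := Int.isFibLike_fib (k - 1)
    rw [sub_add_cancel] at h
    simp only [add_sub_cancel_right, Int.isFibLike_fib k]
    linear_combination G m * h
  exact congrFun ((hG.comp_add m).ext hlin (by simp) (by simp)) n

theorem lucasCompanion (hG : IsFibLike G) : IsFibLike (lucasCompanion G) := fun m => by
  have h₁ := hG (m + 1)
  have h₂ := hG (m - 1)
  simp only [_root_.lucasCompanion, add_sub_cancel_right, sub_add_cancel] at h₁ h₂ ⊢
  linear_combination h₁ + h₂

theorem lucasCompanion_lucasCompanion (hG : IsFibLike G) (m : ℤ) :
    _root_.lucasCompanion (_root_.lucasCompanion G) m = 5 * G m := by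
  have h₁ := hG (m + 1)
  have h₂ := hG (m - 1)
  simp only [_root_.lucasCompanion, add_sub_cancel_right, sub_add_cancel] at h₁ h₂ ⊢
  linear_combination h₁ - h₂ + hG m

theorem apply_add_add_apply_sub_of_odd (hG : IsFibLike G) {p : ℤ} (hp : Odd p) (m : ℤ) :
    G (m + p) + G (m - p) = Int.fib p * _root_.lucasCompanion G m := by
  have hfib_neg : Int.fib (-p) = Int.fib p := by
    simp [Int.fib_neg, Int.not_even_iff_odd.2 hp]
  have hfib_neg_sub : Int.fib (-p - 1) = -Int.fib (p + 1) := by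
    rw [← neg_add', Int.fib_neg, if_pos hp.add_one]
  rw [sub_eq_add_neg, hG.apply_add m p, hG.apply_add m (-p), hfib_neg, hfib_neg_sub,
    Int.isFibLike_fib p, _root_.lucasCompanion, hG m]
  ring

theorem fib_mul_sum_Icc_neg_one_pow_mul_of_odd (hG : IsFibLike G) {p : ℤ} (hp : Odd p) {n : ℕ}
    (hn : Odd n) (c : ℤ) :
    Int.fib p * ∑ k ∈ Icc 1 n, (-1 : ℤ) ^ (k - 1) * G (2 * p * k + c) =
      Int.fib (p * n) * G (p * n + p + c) := by
  set H := _root_.lucasCompanion G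
  have hH : IsFibLike H := hG.lucasCompanion
  set T : ℕ → ℤ := fun k => H (c + p + 2 * p * k) with hT
  refine mul_left_cancel₀ (by norm_num : (5 : ℤ) ≠ 0) ?_
  calc 5 * (Int.fib p * ∑ k ∈ Icc 1 n, (-1 : ℤ) ^ (k - 1) * G (2 * p * k + c))
      = ∑ k ∈ Icc 1 n, (-1 : ℤ) ^ (k - 1) * (T k + T (k - 1)) := by
        rw [mul_sum, mul_sum]
        refine sum_congr rfl fun k hk => ?_
        have hk : ((k - 1 : ℕ) : ℤ) = k - 1 := Nat.cast_sub (mem_Icc.1 hk).1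
        simp only [hT]
        rw [hk, show c + p + 2 * p * k = 2 * p * k + c + p by ring,
          show c + p + 2 * p * (k - 1) = 2 * p * k + c - p by ring,
          hH.apply_add_add_apply_sub_of_odd hp, hG.lucasCompanion_lucasCompanion]
        ring
    _ = T 0 + T n := by rw [sum_Icc_neg_one_pow_mul_add, hn.neg_one_pow]; ring
    _ = H (c + p + p * n - p * n) + H (c + p + p * n + p * n) := by rw [hT]; ring_nf
    _ = 5 * (Int.fib (p * n) * G (p * n + p + c)) := by
        rw [add_comm, hH.apply_add_add_apply_sub_of_odd (hp.mul hn.natCast),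
          hG.lucasCompanion_lucasCompanion]
        ring_nf

end IsFibLike

theorem stmt11_general (F G : ℤ → ℤ)
    (hF0 : F 0 = 0) (hF1 : F 1 = 1) (hF : ∀ m : ℤ, F (m+1) = F m + F (m-1))
    (hG : ∀ m : ℤ, G (m+1) = G m + G (m-1))
    (p q n : ℕ) (t : ℤ) (hodd : Odd (p*q*n)) :
    F (p*q) * ∑ k ∈ Icc 1 n, (-1 : ℤ)^(k-1) * G ((2*p*k : ℤ) + p*q + t) =
    F (p*n) * ∑ k ∈ Icc 1 q, (-1 : ℤ)^(k-1) * G ((2*p*k : ℤ) + p*n + t) := by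
  obtain rfl : F = Int.fib := IsFibLike.eq_fib hF hF0 hF1
  obtain ⟨⟨hp, hq⟩, hn⟩ : (Odd p ∧ Odd q) ∧ Odd n := by
    simpa only [Nat.odd_mul] using hodd
  have hp' : Odd (p : ℤ) := hp.natCast
  have hfib_p : Int.fib p ≠ 0 := Int.fib_eq_zero.not.2 (mod_cast hp.pos.ne')
  refine mul_left_cancel₀ hfib_p ?_
  simp only [add_assoc]
  rw [mul_left_comm, IsFibLike.fib_mul_sum_Icc_neg_one_pow_mul_of_odd hG hp' hn,
    mul_left_comm (Int.fib p), IsFibLike.fib_mul_sum_Icc_neg_one_pow_mul_of_odd hG hp' hq]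
  ring_nf

theorem stmt11 (F G : ℤ → ℤ)
    (hF0 : F 0 = 0) (hF1 : F 1 = 1) (hF : ∀ m : ℤ, F (m+1) = F m + F (m-1))
    (hG : ∀ m : ℤ, G (m+1) = G m + G (m-1))
    (p q n : ℕ) (t : ℤ) (hp : 0 < p) (hq : 0 < q) (hn : 0 < n) (hodd : Odd (p*q*n)) :
    F (p*q) * ∑ k ∈ Icc 1 n, (-1 : ℤ)^(k-1) * G ((2*p*k : ℤ) + p*q + t) =
    F (p*n) * ∑ k ∈ Icc 1 q, (-1 : ℤ)^(k-1) * G ((2*p*k : ℤ) + p*n + t) :=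
  stmt11_general F G hF0 hF1 hF hG p q n t hodd
end

section
/- If p, q, n, t are positive integers with pnq odd and all relevant denominators nonzero, then L_{pq} · ∑_{k=1}^{n} G_{2pk+pq+t} / (G_{2pk+t} G_{2pk+2pq+t}) = L_{pn} · ∑_{k=1}^{q} G_{2pk+pn+t} / (G_{2pk+t} G_{2pk+2pn+t}). -/
/-!
For odd `m`, the Lucas identity `G (a + 2m) - G a = L m * G (a + m)` turns each summand
`L m * G (a + m) / (G a * G (a + 2m))` into `1 / G a - 1 / G (a + 2m)`; since `pnq` is odd, this
applies with `m = pq` and with `m = pn`. Writing `F k = 1 / G (2pk + t)`, the two sides become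
`∑_{k=1}^n (F k - F (k + q))` and `∑_{k=1}^q (F k - F (k + n))`, and each of these equals
`∑_{k=1}^n F k + ∑_{k=1}^q F k - ∑_{k=1}^{n+q} F k`.
-/

open Finset

section ShiftedSums

variable {M : Type*} [AddCommGroup M]

theorem sum_range_sub_shift_comm (F : ℕ → M) (n q : ℕ) :
    ∑ i ∈ range n, (F i - F (i + q)) = ∑ i ∈ range q, (F i - F (i + n)) := by
  have hnq := sum_range_add F n q
  have hqn := sum_range_add F q n
  rw [Nat.add_comm q n] at hqn
  simp only [sum_sub_distrib, sub_eq_sub_iff_add_eq_add, Nat.add_comm _ q, Nat.add_comm _ n]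
  rw [← hnq, hqn]

theorem sum_Icc_sub_shift_comm (F : ℕ → M) (n q : ℕ) :
    ∑ k ∈ Icc 1 n, (F k - F (k + q)) = ∑ k ∈ Icc 1 q, (F k - F (k + n)) := by
  simp only [← Ico_add_one_right_eq_Icc, sum_Ico_eq_sum_range, Nat.add_sub_cancel, add_assoc]
  exact sum_range_sub_shift_comm (fun i => F (1 + i)) n q

end ShiftedSums

section Lucas

variable {R : Type*} [CommRing R] (L : ℕ → ℤ) (G : ℕ → R)

theorem add_two_mul_add_neg_one_pow_mul_eq_lucas_mul (hL0 : L 0 = 2) (hL1 : L 1 = 1)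
    (hL : ∀ m, L (m + 2) = L (m + 1) + L m) (hG : ∀ m, G (m + 2) = G (m + 1) + G m)
    (m a : ℕ) :
    G (a + 2 * m) + (-1) ^ m * G a = L m * G (a + m) := by
  induction m using Nat.twoStepInduction generalizing a with
  | zero => simp [hL0]; ring
  | one => simp [hL1, hG a]
  | more m ih0 ih1 =>
    have hLm : (L (m + 2) : R) = L (m + 1) + L m := by rw [hL m, Int.cast_add]
    linear_combination (norm := ring_nf) ih1 (a + 1) + ih0 (a + 2) + hG (a + 2 * m + 2)
      - (-1) ^ m * hG a - G (a + m + 2) * hLm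

end Lucas

section LucasReciprocals

variable {K : Type*} [Field K] {L : ℕ → ℤ} {G : ℕ → K}

theorem lucas_mul_div_eq_inv_sub_inv
    (hLG : ∀ m a, G (a + 2 * m) + (-1) ^ m * G a = L m * G (a + m)) {m : ℕ} (hm : Odd m)
    {a : ℕ} (ha : G a ≠ 0) (ha' : G (a + 2 * m) ≠ 0) :
    L m * (G (a + m) / (G a * G (a + 2 * m))) = (G a)⁻¹ - (G (a + 2 * m))⁻¹ := by
  have h := hLG m a
  rw [hm.neg_one_pow] at h
  rw [mul_div_assoc', ← h]
  field_simp
  ring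

theorem lucas_mul_sum_eq_sum_inv_sub_inv
    (hLG : ∀ m a, G (a + 2 * m) + (-1) ^ m * G a = L m * G (a + m)) (p q n t : ℕ)
    (hpq : Odd (p * q))
    (hne : ∀ k ∈ Icc 1 n, G (2 * p * k + t) ≠ 0 ∧ G (2 * p * k + 2 * p * q + t) ≠ 0) :
    L (p * q) * ∑ k ∈ Icc 1 n,
        G (2 * p * k + p * q + t) / (G (2 * p * k + t) * G (2 * p * k + 2 * p * q + t)) =
      ∑ k ∈ Icc 1 n, ((G (2 * p * k + t))⁻¹ - (G (2 * p * (k + q) + t))⁻¹) := by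
  rw [mul_sum]
  refine sum_congr rfl fun k hk => ?_
  obtain ⟨hne₀, hne₁⟩ := hne k hk
  have hidx : 2 * p * k + 2 * p * q + t = 2 * p * k + t + 2 * (p * q) := by ring
  rw [hidx] at hne₁ ⊢
  convert lucas_mul_div_eq_inv_sub_inv hLG hpq hne₀ hne₁ using 4 <;> ring_nf

end LucasReciprocals

theorem stmt17_general (L : ℕ → ℤ) (G : ℕ → ℝ)
    (hL0 : L 0 = 2) (hL1 : L 1 = 1) (hL : ∀ m, L (m+2) = L (m+1) + L m)
    (hG : ∀ m, G (m+2) = G (m+1) + G m)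
    (p q n t : ℕ)
    (hodd : Odd (p*n*q))
    (h1 : ∀ k ∈ Icc 1 n, G (2*p*k + t) ≠ 0 ∧ G (2*p*k + 2*p*q + t) ≠ 0)
    (h2 : ∀ k ∈ Icc 1 q, G (2*p*k + t) ≠ 0 ∧ G (2*p*k + 2*p*n + t) ≠ 0) :
    (L (p*q) : ℝ) * ∑ k ∈ Icc 1 n, G (2*p*k + p*q + t) / (G (2*p*k + t) * G (2*p*k + 2*p*q + t)) =
    (L (p*n) : ℝ) * ∑ k ∈ Icc 1 q, G (2*p*k + p*n + t) / (G (2*p*k + t) * G (2*p*k + 2*p*n + t)) := by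
  obtain ⟨hpn, hq⟩ := Nat.odd_mul.mp hodd
  have hpq : Odd (p * q) := (Nat.odd_mul.mp hpn).1.mul hq
  have hLG := add_two_mul_add_neg_one_pow_mul_eq_lucas_mul L G hL0 hL1 hL hG
  rw [lucas_mul_sum_eq_sum_inv_sub_inv hLG p q n t hpq h1,
    lucas_mul_sum_eq_sum_inv_sub_inv hLG p n q t hpn h2]
  exact sum_Icc_sub_shift_comm (fun k => (G (2 * p * k + t))⁻¹) n q

theorem stmt17 (L : ℕ → ℤ) (G : ℕ → ℝ)
    (hL0 : L 0 = 2) (hL1 : L 1 = 1) (hL : ∀ m, L (m+2) = L (m+1) + L m)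
    (hG : ∀ m, G (m+2) = G (m+1) + G m)
    (p q n t : ℕ) (hp : 0 < p) (hq : 0 < q) (hn : 0 < n) (ht : 0 < t)
    (hodd : Odd (p*n*q))
    (h1 : ∀ k ∈ Icc 1 n, G (2*p*k + t) ≠ 0 ∧ G (2*p*k + 2*p*q + t) ≠ 0)
    (h2 : ∀ k ∈ Icc 1 q, G (2*p*k + t) ≠ 0 ∧ G (2*p*k + 2*p*n + t) ≠ 0) :
    (L (p*q) : ℝ) * ∑ k ∈ Icc 1 n, G (2*p*k + p*q + t) / (G (2*p*k + t) * G (2*p*k + 2*p*q + t)) =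
    (L (p*n) : ℝ) * ∑ k ∈ Icc 1 q, G (2*p*k + p*n + t) / (G (2*p*k + t) * G (2*p*k + 2*p*n + t)) :=
  stmt17_general L G hL0 hL1 hL hG p q n t hodd h1 h2
end

section
/- Let W be the Horadam sequence W_0=a, W_1=b, W_i = P·W_{i−1} − Q·W_{i−2}, and U_i the same recurrence with seeds 0, 1. If n and q are nonnegative even integers, p is a positive integer, ε ∈ {+1, −1}, and W_{pk} ≠ 0 for all 1 ≤ k ≤ n+q, then U_{pq} · ∑_{k=1}^{n} (ε·Q^p)^k / (W_{pk} W_{pk+pq}) = U_{pn} · ∑_{k=1}^{q} (ε·Q^p)^k / (W_{pk} W_{pk+pn}). -/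
/-!
Pair `W` with the companion solution `Z` of the same recurrence with `Z 0 = -b`, `Z 1 = a`.
Their Casoratian is `a² + b²`, so the cross products `Z (k+m) W k - Z k W (k+m)` equal
`Qᵏ (a² + b²) U m`. Dividing by `W (pk) W (pk + pm)` turns each summand, multiplied by
`(a² + b²) U (pm)`, into a difference `f (k+m) - f k` with `f j = εʲ Z (pj) / W (pj)`
(here `ε^m = 1` because `m` is even). Both sides of the identity therefore telescope to the same
symmetric expression `F (n+q) - F n - F q` in the partial sums `F` of `f`.
-/

open Finset

def IsHoradam {R : Type*} [CommRing R] (P Q : R) (X : ℕ → R) : Prop :=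
  ∀ i, X (i + 2) = P * X (i + 1) - Q * X i

def horadam {R : Type*} [CommRing R] (P Q x₀ x₁ : R) : ℕ → R
  | 0 => x₀
  | 1 => x₁
  | i + 2 => P * horadam P Q x₀ x₁ (i + 1) - Q * horadam P Q x₀ x₁ i

theorem isHoradam_horadam {R : Type*} [CommRing R] (P Q x₀ x₁ : R) :
    IsHoradam P Q (horadam P Q x₀ x₁) := fun _ => rfl

namespace IsHoradam

variable {R : Type*} [CommRing R] {P Q : R} {X Y U : ℕ → R}

theorem ext (hX : IsHoradam P Q X) (hY : IsHoradam P Q Y) (h0 : X 0 = Y 0) (h1 : X 1 = Y 1) :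
    X = Y := by
  funext i
  induction i using Nat.twoStepInduction with
  | zero => exact h0
  | one => exact h1
  | more i ih ih' => rw [hX, hY, ih, ih']

theorem eq_zero (hX : IsHoradam P Q X) (h0 : X 0 = 0) (h1 : X 1 = 0) : X = 0 :=
  hX.ext (fun _ => by simp) h0 h1

theorem casoratian (hX : IsHoradam P Q X) (hY : IsHoradam P Q Y) (k : ℕ) :
    X (k + 1) * Y k - X k * Y (k + 1) = Q ^ k * (X 1 * Y 0 - X 0 * Y 1) := by
  induction k with
  | zero => simp
  | succ k ih =>
    rw [hX, hY]
    linear_combination Q * ih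

theorem cross_add (hX : IsHoradam P Q X) (hY : IsHoradam P Q Y) (hU : IsHoradam P Q U)
    (hU0 : U 0 = 0) (hU1 : U 1 = 1) (k m : ℕ) :
    X (k + m) * Y k - X k * Y (k + m) = Q ^ k * (X 1 * Y 0 - X 0 * Y 1) * U m := by
  have hL : IsHoradam P Q (fun m => X (k + m) * Y k - X k * Y (k + m)) := fun i => by
    simp only [← add_assoc, hX (k + i), hY (k + i)]
    ring
  have hR : IsHoradam P Q (fun m => Q ^ k * (X 1 * Y 0 - X 0 * Y 1) * U m) := fun i => by
    simp only [hU i]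
    ring
  refine congrFun (hL.ext hR ?_ ?_) m
  · simp [hU0]
  · simpa [hU1] using hX.casoratian hY k

end IsHoradam

theorem Finset.sum_Icc_one_add_sub {M : Type*} [AddCommGroup M] (f : ℕ → M) (m r : ℕ) :
    ∑ k ∈ Icc 1 r, (f (k + m) - f k) =
      ∑ k ∈ Icc 1 (m + r), f k - ∑ k ∈ Icc 1 m, f k - ∑ k ∈ Icc 1 r, f k := by
  induction r with
  | zero => simp
  | succ r ih =>
    rw [sum_Icc_succ_top (by omega), ih, ← add_assoc, sum_Icc_succ_top (by omega),
      sum_Icc_succ_top (by omega), add_comm (r + 1) m, add_assoc]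
    abel

section Telescoping

variable {K : Type*} [Field K] {P Q : K} {Z W U : ℕ → K}

theorem horadam_summand_eq_sub (hZ : IsHoradam P Q Z) (hW : IsHoradam P Q W)
    (hU : IsHoradam P Q U) (hU0 : U 0 = 0) (hU1 : U 1 = 1) {ε : K} {m : ℕ} (hε : ε ^ m = 1)
    (p k : ℕ) (hk : W (p * k) ≠ 0) (hkm : W (p * (k + m)) ≠ 0) :
    (Z 1 * W 0 - Z 0 * W 1) * U (p * m) * ((ε * Q ^ p) ^ k / (W (p * k) * W (p * k + p * m))) =
      ε ^ (k + m) * Z (p * (k + m)) / W (p * (k + m)) - ε ^ k * Z (p * k) / W (p * k) := by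
  have hcross := hZ.cross_add hW hU hU0 hU1 (p * k) (p * m)
  rw [mul_add] at hkm ⊢
  rw [pow_add, hε, mul_one, mul_pow, ← pow_mul]
  field_simp
  linear_combination (-ε ^ k) * hcross

theorem horadam_sum_telescope (hZ : IsHoradam P Q Z) (hW : IsHoradam P Q W)
    (hU : IsHoradam P Q U) (hU0 : U 0 = 0) (hU1 : U 1 = 1) {ε : K} {m r N : ℕ}
    (hε : ε ^ m = 1) (hmr : m + r = N) (p : ℕ) (hWnz : ∀ k ∈ Icc 1 N, W (p * k) ≠ 0) :
    (Z 1 * W 0 - Z 0 * W 1) * (U (p * m) *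
        ∑ k ∈ Icc 1 r, (ε * Q ^ p) ^ k / (W (p * k) * W (p * k + p * m))) =
      ∑ k ∈ Icc 1 N, ε ^ k * Z (p * k) / W (p * k) -
        ∑ k ∈ Icc 1 m, ε ^ k * Z (p * k) / W (p * k) -
        ∑ k ∈ Icc 1 r, ε ^ k * Z (p * k) / W (p * k) := by
  subst hmr
  rw [← sum_Icc_one_add_sub, ← mul_assoc, mul_sum]
  refine sum_congr rfl fun k hk => ?_
  rw [mem_Icc] at hk
  exact horadam_summand_eq_sub hZ hW hU hU0 hU1 hε p k
    (hWnz k (mem_Icc.2 ⟨hk.1, by omega⟩)) (hWnz (k + m) (mem_Icc.2 ⟨by omega, by omega⟩))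

end Telescoping

theorem stmt19_general (a b P Q : ℤ)
    (W U : ℕ → ℝ)
    (hW0 : W 0 = a) (hW1 : W 1 = b) (hW : ∀ i, W (i+2) = P * W (i+1) - Q * W i)
    (hU0 : U 0 = 0) (hU1 : U 1 = 1) (hU : ∀ i, U (i+2) = P * U (i+1) - Q * U i)
    (n q p : ℕ) (hn : Even n) (hq : Even q)
    (ε : ℝ) (hε : ε = 1 ∨ ε = -1)
    (hWnz : ∀ k ∈ Icc 1 (n+q), W (p*k) ≠ 0) :
    U (p*q) * ∑ k ∈ Icc 1 n, (ε * (Q : ℝ)^p)^k / (W (p*k) * W (p*k + p*q)) =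
    U (p*n) * ∑ k ∈ Icc 1 q, (ε * (Q : ℝ)^p)^k / (W (p*k) * W (p*k + p*n)) := by
  have hW' : IsHoradam (P : ℝ) Q W := hW
  have hZ := isHoradam_horadam (P : ℝ) Q (-b) a
  rcases Nat.eq_zero_or_pos (n + q) with hnq | hnq
  · obtain ⟨rfl, rfl⟩ : n = 0 ∧ q = 0 := by omega
    simp
  have hc : horadam (P : ℝ) Q (-b) a 1 * W 0 - horadam (P : ℝ) Q (-b) a 0 * W 1 ≠ 0 := by
    simp only [horadam, hW0, hW1, neg_mul, sub_neg_eq_add, ne_eq, mul_self_add_mul_self_eq_zero]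
    rintro ⟨ha, hb⟩
    refine hWnz 1 (mem_Icc.2 ⟨le_rfl, hnq⟩) ?_
    rw [hW'.eq_zero (by rw [hW0, ha]) (by rw [hW1, hb]), Pi.zero_apply]
  have hεeven : ∀ m, Even m → ε ^ m = 1 := fun m hm => by
    rcases hε with rfl | rfl
    exacts [one_pow m, hm.neg_one_pow]
  apply mul_left_cancel₀ hc
  rw [horadam_sum_telescope hZ hW' hU hU0 hU1 (hεeven q hq) (add_comm q n) p hWnz,
    horadam_sum_telescope hZ hW' hU hU0 hU1 (hεeven n hn) rfl p hWnz]
  ring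

theorem stmt19 (a b P Q : ℤ) (hPQ : P * Q ≠ 0) (hΔ : P^2 - 4*Q > 0)
    (W U : ℕ → ℝ)
    (hW0 : W 0 = a) (hW1 : W 1 = b) (hW : ∀ i, W (i+2) = P * W (i+1) - Q * W i)
    (hU0 : U 0 = 0) (hU1 : U 1 = 1) (hU : ∀ i, U (i+2) = P * U (i+1) - Q * U i)
    (n q p : ℕ) (hp : 0 < p) (hn : Even n) (hq : Even q)
    (ε : ℝ) (hε : ε = 1 ∨ ε = -1)
    (hWnz : ∀ k ∈ Icc 1 (n+q), W (p*k) ≠ 0) :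
    U (p*q) * ∑ k ∈ Icc 1 n, (ε * (Q : ℝ)^p)^k / (W (p*k) * W (p*k + p*q)) =
    U (p*n) * ∑ k ∈ Icc 1 q, (ε * (Q : ℝ)^p)^k / (W (p*k) * W (p*k + p*n)) :=
  stmt19_general a b P Q W U hW0 hW1 hW hU0 hU1 hU n q p hn hq ε hε hWnz
end
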